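/- For every feasible flow φ on G and every arc a ∈ A \ {(t,s)}, there exists an adaptive flow φ' with respect to φ and A' = {a} whose value satisfies φ'(t,s) ≥ φ(t,s) − φ(a); hence the adaptive residual value satisfies ρ(φ, {a}) ≥ φ(t,s) − φ(a), i.e., the loss of flow caused by the destruction of a single arc a is at most the amount of flow φ(a) carried by that arc. -/

import Mathlib

open Finset

/-- A directed network with source `s`, sink `t`, nonnegative capacities and a
distinguished dummy arc from `t` to `s` (whose capacity is not constrained). -/
structure Network (V : Type) (A : Type) [Fintype V] [Fintype A]
    [DecidableEq V] [DecidableEq A] where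
  src : A → V
  dst : A → V
  cap : A → ℝ
  s : V
  t : V
  dummy : A
  src_dummy : src dummy = t
  dst_dummy : dst dummy = s
  cap_nonneg : ∀ a, 0 ≤ cap a

variable {V A : Type} [Fintype V] [Fintype A] [DecidableEq V] [DecidableEq A]

/-- Flow conservation at every vertex. -/
def Conserves (N : Network V A) (φ : A → ℝ) : Prop :=
  ∀ w : V, ∑ a ∈ univ.filter (fun a => N.dst a = w), φ a
         = ∑ a ∈ univ.filter (fun a => N.src a = w), φ a

/-- A feasible flow: nonnegative, respecting capacities on non-dummy arcs,
and conserving flow at every vertex. Its value is `φ N.dummy`. -/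
def Feasible (N : Network V A) (φ : A → ℝ) : Prop :=
  Conserves N φ ∧ (∀ a, 0 ≤ φ a) ∧ (∀ a, a ≠ N.dummy → φ a ≤ N.cap a)

/-- A maximum flow: a feasible flow of maximal value. -/
def IsMaxFlow (N : Network V A) (φ : A → ℝ) : Prop :=
  Feasible N φ ∧ ∀ ψ, Feasible N ψ → ψ N.dummy ≤ φ N.dummy

/-- An adaptive flow with respect to a flow `φ` and a set `A'` of deleted arcs. -/
def Adaptive (N : Network V A) (φ : A → ℝ) (A' : Finset A) (φ' : A → ℝ) : Prop :=
  Conserves N φ' ∧ (∀ a, 0 ≤ φ' a) ∧ (∀ a, φ' a ≤ φ a) ∧ (∀ a ∈ A', φ' a = 0)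

/-- The adaptive residual value `ρ(φ, A')`: the maximum value of an adaptive
flow with respect to `φ` and `A'`. -/
noncomputable def rho (N : Network V A) (φ : A → ℝ) (A' : Finset A) : ℝ :=
  sSup {x | ∃ φ', Adaptive N φ A' φ' ∧ x = φ' N.dummy}

/-! Let `φ'` be an adaptive flow of maximal value, which exists by compactness. Then `φ - φ'` is a
nonnegative circulation carrying `φ a` on `a`. If it carried more than that on the dummy arc
`(t,s)`, a cut argument would produce a path from `s` to `t` through positive arcs other than `a`;
adding a small multiple of the cycle it forms with `(t,s)` to `φ'` would contradict maximality. -/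

namespace Network

variable (N : Network V A)

def inflow (f : A → ℝ) (w : V) : ℝ := ∑ e ∈ univ.filter (fun e => N.dst e = w), f e

def outflow (f : A → ℝ) (w : V) : ℝ := ∑ e ∈ univ.filter (fun e => N.src e = w), f e

def Adj (P : A → Prop) (u w : V) : Prop := ∃ e, P e ∧ N.src e = u ∧ N.dst e = w

theorem inflow_add (f g : A → ℝ) (w : V) : N.inflow (f + g) w = N.inflow f w + N.inflow g w :=
  sum_add_distrib

theorem outflow_add (f g : A → ℝ) (w : V) :
    N.outflow (f + g) w = N.outflow f w + N.outflow g w :=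
  sum_add_distrib

theorem inflow_single (e : A) (w : V) :
    N.inflow (Pi.single e 1) w = if N.dst e = w then 1 else 0 := by
  simp [inflow, sum_pi_single']

theorem outflow_single (e : A) (w : V) :
    N.outflow (Pi.single e 1) w = if N.src e = w then 1 else 0 := by
  simp [outflow, sum_pi_single']

end Network

open Network Relation

variable {N : Network V A} {f g : A → ℝ}

theorem conserves_zero (N : Network V A) : Conserves N 0 := by
  simp [Conserves]

theorem Conserves.add (hf : Conserves N f) (hg : Conserves N g) : Conserves N (f + g) := by
  intro w
  change N.inflow _ w = N.outflow _ w
  rw [inflow_add, outflow_add]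
  exact congrArg₂ (· + ·) (hf w) (hg w)

theorem Conserves.sub (hf : Conserves N f) (hg : Conserves N g) : Conserves N (f - g) := by
  intro w
  simp only [Pi.sub_apply, sum_sub_distrib, hf w, hg w]

theorem Conserves.smul (hf : Conserves N f) (c : ℝ) : Conserves N (c • f) := by
  intro w
  simp only [Pi.smul_apply, smul_eq_mul, ← mul_sum, hf w]

theorem isClosed_setOf_conserves (N : Network V A) : IsClosed {f : A → ℝ | Conserves N f} := by
  simp only [Conserves, Set.ofPred_forall]
  exact isClosed_iInter fun w => isClosed_eq (by fun_prop) (by fun_prop)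

theorem Conserves.sum_enter_eq_sum_leave (hf : Conserves N f) (S : Finset V) :
    ∑ e ∈ univ.filter (fun e => N.dst e ∈ S ∧ N.src e ∉ S), f e
      = ∑ e ∈ univ.filter (fun e => N.src e ∈ S ∧ N.dst e ∉ S), f e := by
  have hS : ∑ e ∈ univ.filter (fun e => N.dst e ∈ S), f e
      = ∑ e ∈ univ.filter (fun e => N.src e ∈ S), f e := by
    rw [← sum_fiberwise_eq_sum_filter, ← sum_fiberwise_eq_sum_filter]
    exact sum_congr rfl fun w _ => hf w
  rw [← sum_filter_add_sum_filter_not (univ.filter fun e => N.dst e ∈ S) (fun e => N.src e ∈ S),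
    ← sum_filter_add_sum_filter_not (univ.filter fun e => N.src e ∈ S) (fun e => N.dst e ∈ S),
    filter_filter, filter_filter, filter_filter, filter_filter] at hS
  rw [filter_congr fun _ _ => and_comm (a := N.dst _ ∈ S) (b := N.src _ ∈ S)] at hS
  linarith

theorem Network.exists_pathFlow {P : A → Prop} {u v : V} (h : ReflTransGen (N.Adj P) u v) :
    ∃ δ : A → ℝ, (∀ e, 0 ≤ δ e) ∧ (∀ e, δ e ≠ 0 → P e) ∧
      ∀ w, N.inflow δ w + (if u = w then 1 else 0) = N.outflow δ w + (if v = w then 1 else 0) := by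
  induction h with
  | refl => exact ⟨0, fun _ => le_rfl, fun _ h => absurd rfl h, fun _ => by simp [inflow, outflow]⟩
  | tail _ hstep ih =>
    obtain ⟨δ, hδ0, hδP, hδ⟩ := ih
    obtain ⟨e, he, rfl, rfl⟩ := hstep
    refine ⟨δ + Pi.single e 1, fun f => add_nonneg (hδ0 f) ?_, fun f hf => ?_, fun w => ?_⟩
    · rw [Pi.single_apply]; split_ifs <;> norm_num
    · by_cases hfe : f = e
      · exact hfe ▸ he
      · exact hδP f (by simpa [hfe] using hf)
    · rw [inflow_add, outflow_add, inflow_single, outflow_single]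
      linarith [hδ w]

theorem Network.exists_circulation_of_reachable {P : A → Prop} {b : A}
    (h : ReflTransGen (N.Adj P) (N.dst b) (N.src b)) :
    ∃ c : A → ℝ, Conserves N c ∧ (∀ e, 0 ≤ c e) ∧ (∀ e, c e ≠ 0 → P e ∨ e = b) ∧ 1 ≤ c b := by
  obtain ⟨δ, hδ0, hδP, hδ⟩ := N.exists_pathFlow h
  refine ⟨δ + Pi.single b 1, fun w => ?_, fun e => add_nonneg (hδ0 e) ?_, fun e he => ?_, ?_⟩
  · change N.inflow _ w = N.outflow _ w
    rw [inflow_add, outflow_add, inflow_single, outflow_single]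
    exact hδ w
  · rw [Pi.single_apply]; split_ifs <;> norm_num
  · by_cases heb : e = b
    · exact Or.inr heb
    · exact Or.inl (hδP e (by simpa [heb] using he))
  · simpa using hδ0 b

/-- The vertices reachable from the head of `b` form a cut that `b` enters and that positive
flow leaves only through `a`. -/
theorem Conserves.apply_le_of_not_reachable (hf : Conserves N f) (hf0 : ∀ e, 0 ≤ f e) (a b : A)
    (h : ¬ ReflTransGen (N.Adj fun e => e ≠ a ∧ 0 < f e) (N.dst b) (N.src b)) : f b ≤ f a := by
  classical
  set S := univ.filter (ReflTransGen (N.Adj fun e => e ≠ a ∧ 0 < f e) (N.dst b))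
  have hleave : ∀ e ∈ univ.filter (fun e => N.src e ∈ S ∧ N.dst e ∉ S), e ≠ a → f e = 0 := by
    intro e he hea
    simp only [S, mem_filter, mem_univ, true_and] at he
    by_contra hfe
    exact he.2 (he.1.tail ⟨e, ⟨hea, (hf0 e).lt_of_ne' hfe⟩, rfl, rfl⟩)
  calc f b ≤ ∑ e ∈ univ.filter (fun e => N.dst e ∈ S ∧ N.src e ∉ S), f e :=
        single_le_sum (fun e _ => hf0 e) (by simp [S, h, ReflTransGen.refl])
    _ = ∑ e ∈ univ.filter (fun e => N.src e ∈ S ∧ N.dst e ∉ S), f e :=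
        hf.sum_enter_eq_sum_leave S
    _ ≤ f a := by
        rw [← sum_filter_add_sum_filter_not _ (· = a), sum_eq_zero fun e he => hleave e
          (mem_filter.1 he).1 (mem_filter.1 he).2, add_zero]
        exact (sum_le_sum_of_subset_of_nonneg (by intro e; simp +contextual)
          fun e _ _ => hf0 e).trans_eq (sum_singleton f a)

theorem exists_pos_mul_le {ι : Type*} [Finite ι] {c θ : ι → ℝ} (hθ : ∀ i, 0 ≤ θ i)
    (hc : ∀ i, c i ≠ 0 → 0 < θ i) : ∃ ε > 0, ∀ i, ε * c i ≤ θ i := by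
  have : ∀ᶠ ε in nhdsWithin (0 : ℝ) (Set.Ioi 0), ∀ i, ε * c i ≤ θ i := by
    refine Filter.eventually_all.2 fun i => ?_
    by_cases hci : c i = 0
    · exact Filter.Eventually.of_forall fun ε => by simpa [hci] using hθ i
    · have hlim : Filter.Tendsto (fun ε : ℝ => ε * c i) (nhdsWithin 0 (Set.Ioi 0)) (nhds 0) :=
        ((continuous_mul_const (c i)).tendsto' 0 0 (zero_mul _)).mono_left nhdsWithin_le_nhds
      exact (hlim.eventually (gt_mem_nhds (hc i hci))).mono fun _ => le_of_lt
  obtain ⟨ε, hε, hε0⟩ := (this.and self_mem_nhdsWithin).exists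
  exact ⟨ε, hε0, hε⟩

theorem Conserves.exists_subcirculation_of_lt (hf : Conserves N f) (hf0 : ∀ e, 0 ≤ f e) {a b : A}
    (hab : a ≠ b) (hlt : f a < f b) :
    ∃ c : A → ℝ, Conserves N c ∧ (∀ e, 0 ≤ c e) ∧ (∀ e, c e ≤ f e) ∧ c a = 0 ∧ 0 < c b := by
  have hreach : ReflTransGen (N.Adj fun e => e ≠ a ∧ 0 < f e) (N.dst b) (N.src b) :=
    not_not.1 fun h => hlt.not_ge (hf.apply_le_of_not_reachable hf0 a b h)
  obtain ⟨c, hc, hc0, hcsupp, hcb⟩ := N.exists_circulation_of_reachable hreach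
  have hpos : ∀ e, c e ≠ 0 → 0 < f e := fun e he => by
    rcases hcsupp e he with ⟨-, hfe⟩ | rfl
    exacts [hfe, (hf0 a).trans_lt hlt]
  have hca : c a = 0 := by_contra fun ha => by
    rcases hcsupp a ha with ⟨haa, -⟩ | hab'
    exacts [haa rfl, hab hab']
  obtain ⟨ε, hε, hεf⟩ := exists_pos_mul_le hf0 hpos
  exact ⟨ε • c, hc.smul ε, fun e => mul_nonneg hε.le (hc0 e), hεf, by simp [hca],
    mul_pos hε (zero_lt_one.trans_le hcb)⟩

section Adaptive

variable {φ φ' c : A → ℝ} {A' : Finset A}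

theorem adaptive_zero (N : Network V A) (hφ : ∀ e, 0 ≤ φ e) (A' : Finset A) :
    Adaptive N φ A' 0 :=
  ⟨conserves_zero N, fun _ => le_rfl, hφ, fun _ _ => rfl⟩

theorem Adaptive.add (hφ' : Adaptive N φ A' φ') (hc : Conserves N c) (hc0 : ∀ e, 0 ≤ c e)
    (hcle : ∀ e, c e ≤ φ e - φ' e) (hcA' : ∀ e ∈ A', c e = 0) : Adaptive N φ A' (φ' + c) := by
  obtain ⟨hcons, hnonneg, hle, hzero⟩ := hφ'
  refine ⟨hcons.add hc, fun e => add_nonneg (hnonneg e) (hc0 e), fun e => ?_, fun e he => ?_⟩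
  · linarith [hcle e, show (φ' + c) e = φ' e + c e from rfl]
  · simp [hzero e he, hcA' e he]

theorem isCompact_setOf_adaptive (N : Network V A) (φ : A → ℝ) (A' : Finset A) :
    IsCompact {ψ | Adaptive N φ A' ψ} := by
  have : {ψ | Adaptive N φ A' ψ}
      = Set.Icc 0 φ ∩ ({ψ | Conserves N ψ} ∩ ⋂ e ∈ A', {ψ | ψ e = 0}) := by
    ext ψ
    simp only [Adaptive, Set.mem_ofPred_eq, Set.mem_inter_iff, Set.mem_Icc, Set.mem_iInter,
      Pi.le_def, Pi.zero_apply]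
    tauto
  rw [this]
  exact isCompact_Icc.inter_right ((isClosed_setOf_conserves N).inter
    (isClosed_biInter fun e _ => isClosed_eq (continuous_apply e) continuous_const))

theorem exists_adaptive_forall_le (N : Network V A) (hφ : ∀ e, 0 ≤ φ e) (A' : Finset A) :
    ∃ φ', Adaptive N φ A' φ' ∧ ∀ ψ, Adaptive N φ A' ψ → ψ N.dummy ≤ φ' N.dummy :=
  (isCompact_setOf_adaptive N φ A').exists_isMaxOn ⟨0, adaptive_zero N hφ A'⟩
    (continuous_apply N.dummy).continuousOn

theorem Adaptive.le_rho (hφ' : Adaptive N φ A' φ') : φ' N.dummy ≤ rho N φ A' :=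
  le_csSup ⟨φ N.dummy, by rintro _ ⟨ψ, hψ, rfl⟩; exact hψ.2.2.1 _⟩ ⟨φ', hφ', rfl⟩

end Adaptive

/-- destroying a single non-dummy arc `a` loses at most `φ a`
units of flow: some adaptive flow with respect to `φ` and `{a}` has value at
least `φ(t,s) - φ(a)`, and hence `ρ(φ, {a}) ≥ φ(t,s) - φ(a)`. -/
theorem single_arc_loss_le_flow (N : Network V A) (φ : A → ℝ)
    (hφ : Feasible N φ) (a : A) (ha : a ≠ N.dummy) :
    (∃ φ', Adaptive N φ {a} φ' ∧ φ N.dummy - φ a ≤ φ' N.dummy) ∧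
      φ N.dummy - φ a ≤ rho N φ {a} := by
  obtain ⟨hφcons, hφ0, -⟩ := hφ
  obtain ⟨φ', hφ', hmax⟩ := exists_adaptive_forall_le N hφ0 {a}
  have hloss : φ N.dummy - φ a ≤ φ' N.dummy := by
    by_contra! hlt
    have hφ'a : φ' a = 0 := hφ'.2.2.2 a (mem_singleton_self a)
    obtain ⟨c, hc, hc0, hcle, hca, hcdummy⟩ :=
      (hφcons.sub hφ'.1).exists_subcirculation_of_lt (fun e => sub_nonneg.2 (hφ'.2.2.1 e)) ha
        (by simp only [Pi.sub_apply, hφ'a]; linarith)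
    have := hmax _ (hφ'.add hc hc0 hcle (by simpa using hca))
    simp only [Pi.add_apply] at this
    linarith
  exact ⟨⟨φ', hφ', hloss⟩, hloss.trans hφ'.le_rho⟩
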